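/- arXiv:2510.19865 — 2 statements merged into one kernel-verified Lean document; each statement's English description precedes it below -/
import Mathlib

section
/- For every natural number n ≥ 1, ∫_0^∞ x^{2n-1}/(e^{2πx} - 1) dx = (2n-1)!·ζ(2n)/(2π)^{2n}. -/
open Real in
theorem integral_x_pow_div_exp_sub_one (n : ℕ) (hn : 1 ≤ n) :
    ((∫ x in Set.Ioi (0:ℝ), x ^ (2 * n - 1) / (Real.exp (2 * π * x) - 1) : ℝ) : ℂ)
      = (Nat.factorial (2 * n - 1) : ℂ) * riemannZeta (2 * n) / (2 * (π : ℂ)) ^ (2 * n) := by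
  classical
  set s : ℂ := ((2 * n : ℕ) : ℂ) with hs_def
  have hsre : s.re = (2 * n : ℕ) := by simp [hs_def]
  have hspos : 0 < s.re := by
    rw [hsre]; positivity
  have hs1 : 1 < s.re := by
    rw [hsre]; exact_mod_cast Nat.lt_of_lt_of_le Nat.one_lt_two (by omega)
  set a : ℕ → ℂ := fun i => if i = 0 then 0 else 1 with ha_def
  set p : ℕ → ℝ := fun i => 2 * π * i with hp_def
  set F : ℝ → ℂ := fun t => ((1 / (Real.exp (2 * π * t) - 1) : ℝ) : ℂ) with hF_def
  have hp : ∀ i, a i = 0 ∨ 0 < p i := by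
    intro i
    rcases Nat.eq_zero_or_pos i with h | h
    · left; simp [ha_def, h]
    · right
      have : (0:ℝ) < (i:ℝ) := by exact_mod_cast h
      simp only [hp_def]
      positivity
  have hF : ∀ t ∈ Set.Ioi (0:ℝ), HasSum (fun i => a i * Real.exp (-p i * t)) (F t) := by
    intro t ht
    have ht' : (0:ℝ) < t := ht
    set r : ℝ := Real.exp (-(2 * π * t)) with hr_def
    have hr0 : 0 < r := Real.exp_pos _
    have hr1 : r < 1 := by
      rw [hr_def, Real.exp_lt_one_iff]
      have : 0 < 2 * π * t := by positivity
      linarith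
    have hgeom : HasSum (fun i : ℕ => r ^ i) (1 - r)⁻¹ :=
      hasSum_geometric_of_lt_one hr0.le hr1
    have hind : HasSum (fun i : ℕ => if i = 0 then (1:ℝ) else 0) 1 := by
      simpa using hasSum_ite_eq (0 : ℕ) (1 : ℝ)
    have hsum : HasSum (fun i : ℕ => if i = 0 then 0 else r ^ i)
        ((1 - r)⁻¹ - 1) := by
      have := hgeom.sub hind
      refine this.congr_fun fun i => ?_
      by_cases h : i = 0 <;> simp [h]
    have hval : (1 - r)⁻¹ - 1 = 1 / (Real.exp (2 * π * t) - 1) := by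
      have he : Real.exp (2 * π * t) = r⁻¹ := by
        rw [hr_def, ← Real.exp_neg, neg_neg]
      have h1r : 1 - r ≠ 0 := by linarith
      have hE1 : Real.exp (2 * π * t) - 1 ≠ 0 := by
        rw [he]
        have : 1 < r⁻¹ := (one_lt_inv_iff₀).mpr ⟨hr0, hr1⟩
        linarith
      rw [he]
      field_simp
      ring
    rw [hval] at hsum
    have hsC : HasSum (fun i : ℕ => ((if i = 0 then 0 else r ^ i : ℝ) : ℂ)) (F t) := by
      simpa [hF_def] using Complex.hasSum_ofReal.mpr hsum
    refine hsC.congr_fun fun i => ?_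
    by_cases h : i = 0
    · simp [ha_def, h]
    · have hx : Real.exp (-p i * t) = r ^ i := by
        rw [hr_def, ← Real.exp_nat_mul, hp_def]
        ring_nf
      simp only [ha_def, if_neg h, one_mul, hx, Complex.ofReal_pow]
  have h_sum : Summable fun i : ℕ => ‖a i‖ / (p i) ^ s.re := by
    have hcomp : Summable fun i : ℕ => 1 / (i : ℝ) ^ (s.re) := by
      rw [Real.summable_one_div_nat_rpow]
      exact hs1
    refine Summable.of_nonneg_of_le (fun i => by positivity) (fun i => ?_) hcomp
    rcases Nat.eq_zero_or_pos i with h | h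
    · simp [ha_def, h]
      positivity
    · have hi : (1:ℝ) ≤ (i:ℝ) := by exact_mod_cast h
      have h2pi : (1:ℝ) ≤ 2 * π := by nlinarith [Real.pi_gt_three]
      have h1 : ‖a i‖ = 1 := by simp [ha_def, h.ne']
      rw [h1]
      have hle : (i:ℝ) ^ s.re ≤ (p i) ^ s.re := by
        apply Real.rpow_le_rpow (by positivity) _ hspos.le
        show (i:ℝ) ≤ 2 * π * (i:ℝ)
        have := mul_le_mul_of_nonneg_right h2pi (by positivity : (0:ℝ) ≤ (i:ℝ))
        linarith
      have hppos : (0:ℝ) < (i:ℝ) ^ s.re := by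
        apply Real.rpow_pos_of_pos; exact_mod_cast h
      exact one_div_le_one_div_of_le hppos hle
  have key := hasSum_mellin hp hspos hF h_sum
  -- the same series sums to Γ s / (2π)^s * ζ s
  have hzeta : HasSum (fun i : ℕ => 1 / (i : ℂ) ^ s) (riemannZeta s) := by
    have hsummable : Summable fun i : ℕ => 1 / (i : ℂ) ^ s :=
      (Complex.summable_one_div_nat_cpow).mpr hs1
    have := zeta_eq_tsum_one_div_nat_cpow hs1
    rw [this]
    exact hsummable.hasSum
  have hzeta2 : HasSum (fun i : ℕ => Complex.Gamma s / ((2 * π : ℝ) : ℂ) ^ s * (1 / (i : ℂ) ^ s))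
      (Complex.Gamma s / ((2 * π : ℝ) : ℂ) ^ s * riemannZeta s) := hzeta.mul_left _
  have hsne : s ≠ 0 := by
    simp only [hs_def, Ne, Nat.cast_eq_zero]
    omega
  have hfun : ∀ i : ℕ, Complex.Gamma s * a i / (p i : ℂ) ^ s
      = Complex.Gamma s / ((2 * π : ℝ) : ℂ) ^ s * (1 / (i : ℂ) ^ s) := by
    intro i
    rcases Nat.eq_zero_or_pos i with h | h
    · simp [ha_def, h, Complex.zero_cpow hsne]
    · have hi : (0:ℝ) < (i:ℝ) := by exact_mod_cast h
      have hsplit : ((p i : ℝ) : ℂ) ^ s = ((2 * π : ℝ) : ℂ) ^ s * (((i:ℝ)) : ℂ) ^ s := by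
        rw [show p i = (2 * π) * (i:ℝ) by rw [hp_def]]
        rw [show ((2 * π * (i:ℝ) : ℝ) : ℂ) = ((2 * π : ℝ) : ℂ) * (((i:ℝ)) : ℂ) by
          push_cast; ring]
        exact Complex.mul_cpow_ofReal_nonneg (by positivity) hi.le s
      rw [hsplit, show a i = 1 by simp [ha_def, h.ne'],
        show (((i:ℝ)) : ℂ) = ((i:ℕ) : ℂ) by push_cast; ring]
      rw [mul_one, div_mul_eq_div_div, mul_one_div]
  have key2 : HasSum (fun i : ℕ => Complex.Gamma s * a i / (p i : ℂ) ^ s)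
      (Complex.Gamma s / ((2 * π : ℝ) : ℂ) ^ s * riemannZeta s) :=
    hzeta2.congr_fun hfun
  have hmellin : mellin F s = Complex.Gamma s / ((2 * π : ℝ) : ℂ) ^ s * riemannZeta s :=
    key.unique key2
  -- identify the mellin transform with the real integral
  have hint : mellin F s
      = ((∫ x in Set.Ioi (0:ℝ), x ^ (2 * n - 1) / (Real.exp (2 * π * x) - 1) : ℝ) : ℂ) := by
    have hcongr : ∀ t ∈ Set.Ioi (0:ℝ), (t : ℂ) ^ (s - 1) • F t
        = ((t ^ (2 * n - 1) / (Real.exp (2 * π * t) - 1) : ℝ) : ℂ) := by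
      intro t ht
      have hsm1 : s - 1 = ((2 * n - 1 : ℕ) : ℂ) := by
        rw [hs_def]
        rw [show (2 * n : ℕ) = (2 * n - 1 : ℕ) + 1 by omega]
        push_cast
        ring
      rw [hsm1, Complex.cpow_natCast, smul_eq_mul, hF_def]
      push_cast
      ring
    rw [mellin, MeasureTheory.setIntegral_congr_fun measurableSet_Ioi hcongr]
    exact integral_ofReal (𝕜 := ℂ)
  -- final algebra
  have hGamma : Complex.Gamma s = (Nat.factorial (2 * n - 1) : ℂ) := by
    rw [hs_def, show (2 * n : ℕ) = (2 * n - 1 : ℕ) + 1 by omega]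
    exact_mod_cast Complex.Gamma_nat_eq_factorial (2 * n - 1)
  have hpow : ((2 * π : ℝ) : ℂ) ^ s = (2 * (π : ℂ)) ^ (2 * n) := by
    rw [hs_def, Complex.cpow_natCast]
    push_cast
    ring
  have hzs : riemannZeta s = riemannZeta (2 * n) := by rw [hs_def]; push_cast; ring_nf
  rw [← hint, hmellin, hGamma, hpow, hzs]
  ring
end

section
/- For every natural number n ≥ 1, if I_n = ∫_0^∞ 2x^{2n-1}/((x²+1)(e^{2πx} - 1)) dx, then (I_n + I_{n+1})/(I_{n+1} + I_{n+2}) = 4π²·ζ(2n)/((2n)(2n+1)·ζ(2n+2)). -/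
open Real MeasureTheory Set

private noncomputable def Zr (k : ℕ) : ℝ := ∑' m : ℕ, 1 / ((m : ℝ) + 1) ^ k

private lemma Zr_summable {k : ℕ} (hk : 2 ≤ k) :
    Summable (fun m : ℕ => 1 / ((m : ℝ) + 1) ^ k) := by
  have h := Real.summable_one_div_nat_pow.mpr (show 1 < k by omega)
  have := (summable_nat_add_iff (f := fun n : ℕ => 1 / (n : ℝ) ^ k) 1).mpr h
  refine this.congr fun m => ?_
  push_cast
  ring_nf

private lemma Zr_pos {k : ℕ} (hk : 2 ≤ k) : 0 < Zr k := by
  refine Summable.tsum_pos (Zr_summable hk) (fun m => by positivity) 0 (by norm_num)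

private lemma zeta_eq_Zr {k : ℕ} (hk : 2 ≤ k) :
    riemannZeta (k : ℂ) = ((Zr k : ℝ) : ℂ) := by
  rw [zeta_nat_eq_tsum_of_gt_one (show 1 < k by omega), Zr, Complex.ofReal_tsum]
  have hs : Summable (fun n : ℕ => 1 / (n : ℝ) ^ k) :=
    Real.summable_one_div_nat_pow.mpr (show 1 < k by omega)
  have hcast : ∀ n : ℕ, (1 / (n : ℂ) ^ k) = ((1 / (n : ℝ) ^ k : ℝ) : ℂ) := by
    intro n; push_cast; ring
  calc ∑' n : ℕ, 1 / (n : ℂ) ^ k = ∑' n : ℕ, ((1 / (n : ℝ) ^ k : ℝ) : ℂ) := by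
        exact tsum_congr hcast
    _ = ((∑' n : ℕ, 1 / (n : ℝ) ^ k : ℝ) : ℂ) := (Complex.ofReal_tsum _).symm
    _ = _ := by
        rw [Summable.tsum_eq_zero_add hs]
        congr 1
        rw [show (1 : ℝ) / (0 : ℕ) ^ k = 0 by
          simp [zero_pow (show k ≠ 0 by omega)]]
        rw [zero_add]
        push_cast
        norm_num

private lemma integral_pow_exp (p : ℕ) {b : ℝ} (hb : 0 < b) :
    ∫ x in Ioi (0:ℝ), x ^ p * Real.exp (-(b * x)) = (Nat.factorial p : ℝ) / b ^ (p + 1) := by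
  have h := integral_rpow_mul_exp_neg_mul_Ioi (a := (p : ℝ) + 1) (by positivity) hb
  rw [show ((p : ℝ) + 1) - 1 = (p : ℝ) by ring] at h
  simp_rw [Real.rpow_natCast] at h
  rw [Real.Gamma_nat_eq_factorial,
    show ((p : ℝ) + 1) = ((p + 1 : ℕ) : ℝ) by push_cast; ring,
    Real.rpow_natCast] at h
  rw [h, div_pow, one_pow]
  field_simp

private lemma integrableOn_pow_exp (p : ℕ) {b : ℝ} (hb : 0 < b) :
    IntegrableOn (fun x : ℝ => x ^ p * Real.exp (-(b * x))) (Ioi 0) := by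
  have h := integrableOn_rpow_mul_exp_neg_mul_rpow (s := (p : ℝ)) (p := 1)
    (lt_of_lt_of_le neg_one_lt_zero (Nat.cast_nonneg p)) one_pos hb
  simpa [Real.rpow_natCast, Real.rpow_one, neg_mul] using h

private lemma geom_sum_exp {a : ℝ} (ha : 0 < a) :
    ∑' k : ℕ, Real.exp (-(a * ((k : ℝ) + 1))) = 1 / (Real.exp a - 1) := by
  have hr0 : (0:ℝ) ≤ Real.exp (-a) := (Real.exp_pos _).le
  have hr1 : Real.exp (-a) < 1 := Real.exp_lt_one_iff.mpr (by linarith)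
  have hterm : ∀ k : ℕ, Real.exp (-(a * ((k : ℝ) + 1))) = Real.exp (-a) ^ k * Real.exp (-a) := by
    intro k
    rw [← Real.exp_nat_mul, ← Real.exp_add]
    congr 1
    push_cast
    ring
  rw [tsum_congr hterm, tsum_mul_right, tsum_geometric_of_lt_one hr0 hr1]
  have he : (1:ℝ) < Real.exp a := Real.one_lt_exp_iff.mpr ha
  have h1 : Real.exp a - 1 ≠ 0 := by linarith
  have h2 : 1 - Real.exp (-a) ≠ 0 := by linarith
  rw [Real.exp_neg]
  have h3 : Real.exp a ≠ 0 := Real.exp_ne_zero a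
  field_simp

private lemma main_integral (m : ℕ) (hm : 1 ≤ m) :
    ∫ x in Ioi (0:ℝ), 2 * x ^ (2 * m - 1) / (Real.exp (2 * π * x) - 1)
      = 2 * (Nat.factorial (2 * m - 1) : ℝ) / (2 * π) ^ (2 * m) * Zr (2 * m) := by
  set p := 2 * m - 1 with hp
  have hp1 : p + 1 = 2 * m := by omega
  set c : ℝ := 2 * (Nat.factorial p : ℝ) / (2 * π) ^ (2 * m) with hc
  have hb : ∀ k : ℕ, (0:ℝ) < 2 * π * ((k : ℝ) + 1) := by
    intro k; positivity
  set F : ℕ → ℝ → ℝ := fun k x => 2 * (x ^ p * Real.exp (-(2 * π * ((k : ℝ) + 1) * x))) with hF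
  have hFint : ∀ k, Integrable (F k) (volume.restrict (Ioi 0)) := fun k =>
    (integrableOn_pow_exp p (hb k)).const_mul 2
  have hFval : ∀ k : ℕ, ∫ x in Ioi (0:ℝ), F k x = c * (1 / ((k : ℝ) + 1) ^ (2 * m)) := by
    intro k
    rw [hF]
    simp only
    rw [MeasureTheory.integral_const_mul, integral_pow_exp p (hb k), hp1, hc]
    rw [mul_pow]
    have h1 : ((k : ℝ) + 1) ^ (2 * m) ≠ 0 := by positivity
    have h2 : ((2:ℝ) * π) ^ (2 * m) ≠ 0 := by positivity
    field_simp
  have hnorm : ∀ k : ℕ, ∫ x in Ioi (0:ℝ), ‖F k x‖ = c * (1 / ((k : ℝ) + 1) ^ (2 * m)) := by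
    intro k
    rw [← hFval k]
    refine setIntegral_congr_fun measurableSet_Ioi fun x hx => ?_
    have hx0 : (0:ℝ) < x := hx
    exact norm_of_nonneg (by positivity)
  have hsum : Summable fun k : ℕ => ∫ x in Ioi (0:ℝ), ‖F k x‖ := by
    refine Summable.congr ((Zr_summable (show 2 ≤ 2 * m by omega)).mul_left c) fun k => ?_
    rw [hnorm k]
  have hkey := integral_tsum_of_summable_integral_norm hFint hsum
  have hleft : ∑' k : ℕ, ∫ x in Ioi (0:ℝ), F k x = c * Zr (2 * m) := by
    rw [tsum_congr hFval, tsum_mul_left, Zr]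
  have hright : ∫ x in Ioi (0:ℝ), (∑' k : ℕ, F k x)
      = ∫ x in Ioi (0:ℝ), 2 * x ^ p / (Real.exp (2 * π * x) - 1) := by
    refine setIntegral_congr_fun measurableSet_Ioi fun x hx => ?_
    have hx0 : (0:ℝ) < x := hx
    have h2x : (0:ℝ) < 2 * π * x := by positivity
    have : ∀ k : ℕ, F k x = 2 * x ^ p * Real.exp (-(2 * π * x * ((k : ℝ) + 1))) := by
      intro k; rw [hF]; simp only; ring_nf
    rw [tsum_congr this, tsum_mul_left, geom_sum_exp h2x]
    ring
  rw [← hright, ← hkey, hleft, hc]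

private lemma exp_lower {t : ℝ} (ht : 0 < t) :
    2 * t * Real.exp t ≤ Real.exp (2 * t) - 1 := by
  have hs : t < Real.sinh t := Real.self_lt_sinh_iff.mpr ht
  rw [Real.sinh_eq] at hs
  have h : 2 * t ≤ Real.exp t - Real.exp (-t) := by linarith
  have := mul_le_mul_of_nonneg_right h (Real.exp_pos t).le
  calc 2 * t * Real.exp t ≤ (Real.exp t - Real.exp (-t)) * Real.exp t := this
    _ = Real.exp (2 * t) - 1 := by
        rw [sub_mul, ← Real.exp_add, ← Real.exp_add,
          show t + t = 2 * t by ring, show -t + t = 0 by ring, Real.exp_zero]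

private lemma integrable_f (m : ℕ) (hm : 1 ≤ m) :
    IntegrableOn (fun x : ℝ =>
      2 * x ^ (2 * m - 1) / ((x ^ 2 + 1) * (Real.exp (2 * π * x) - 1))) (Ioi 0) := by
  have hmeas : AEStronglyMeasurable (fun x : ℝ =>
      2 * x ^ (2 * m - 1) / ((x ^ 2 + 1) * (Real.exp (2 * π * x) - 1)))
      (volume.restrict (Ioi 0)) := by
    apply Measurable.aestronglyMeasurable
    fun_prop
  have hπ : (0:ℝ) < π := Real.pi_pos
  have hg : IntegrableOn (fun x : ℝ => (1/π) * (x ^ (2 * m - 2) * Real.exp (-(π * x)))) (Ioi 0) :=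
    (integrableOn_pow_exp (2 * m - 2) hπ).const_mul _
  refine Integrable.mono' hg hmeas ?_
  refine (ae_restrict_iff' measurableSet_Ioi).mpr (Filter.Eventually.of_forall fun x hx => ?_)
  have hx0 : (0:ℝ) < x := hx
  have ht : (0:ℝ) < π * x := by positivity
  have hlow : 2 * (π * x) * Real.exp (π * x) ≤ Real.exp (2 * (π * x)) - 1 := exp_lower ht
  have hD1 : (0:ℝ) < Real.exp (2 * π * x) - 1 := by
    have := Real.one_lt_exp_iff.mpr (show (0:ℝ) < 2 * π * x by positivity)
    linarith
  have hD : (0:ℝ) < (x ^ 2 + 1) * (Real.exp (2 * π * x) - 1) := by positivity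
  rw [norm_of_nonneg (by positivity)]
  have hstep1 : 2 * x ^ (2 * m - 1) / ((x ^ 2 + 1) * (Real.exp (2 * π * x) - 1))
      ≤ 2 * x ^ (2 * m - 1) / (2 * (π * x) * Real.exp (π * x)) := by
    apply div_le_div_of_nonneg_left (by positivity) (by positivity)
    have h1 : (1:ℝ) ≤ x ^ 2 + 1 := by nlinarith
    calc 2 * (π * x) * Real.exp (π * x) ≤ Real.exp (2 * (π * x)) - 1 := hlow
      _ = 1 * (Real.exp (2 * π * x) - 1) := by rw [one_mul]; ring_nf
      _ ≤ (x ^ 2 + 1) * (Real.exp (2 * π * x) - 1) := by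
          apply mul_le_mul_of_nonneg_right h1 hD1.le
  refine hstep1.trans (le_of_eq ?_)
  have hxne : x ≠ 0 := ne_of_gt hx0
  have hpow : x ^ (2 * m - 1) = x ^ (2 * m - 2) * x := by
    rw [← pow_succ]
    congr 1
    omega
  rw [hpow, Real.exp_neg]
  have hexp : Real.exp (π * x) ≠ 0 := Real.exp_ne_zero _
  field_simp

open Real in
theorem gamma_ratio_identity (n : ℕ) (hn : 1 ≤ n)
    (I : ℕ → ℝ)
    (hI : ∀ m, I m = ∫ x in Set.Ioi (0:ℝ),
        2 * x ^ (2 * m - 1) / ((x ^ 2 + 1) * (Real.exp (2 * π * x) - 1))) :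
    (((I n + I (n + 1)) / (I (n + 1) + I (n + 2)) : ℝ) : ℂ)
      = 4 * (π : ℂ) ^ 2 * riemannZeta (2 * n)
        / ((2 * n) * (2 * n + 1) * riemannZeta (2 * n + 2)) := by
  have key : ∀ m, 1 ≤ m →
      I m + I (m + 1) = 2 * (Nat.factorial (2 * m - 1) : ℝ) / (2 * π) ^ (2 * m) * Zr (2 * m) := by
    intro m hm
    rw [hI m, hI (m + 1),
      ← integral_add (integrable_f m hm) (integrable_f (m + 1) (by omega)),
      ← main_integral m hm]
    refine setIntegral_congr_fun measurableSet_Ioi fun x hx => ?_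
    have hx0 : (0:ℝ) < x := hx
    have hD1 : (0:ℝ) < Real.exp (2 * π * x) - 1 := by
      have := Real.one_lt_exp_iff.mpr (show (0:ℝ) < 2 * π * x by positivity)
      linarith
    have hx2 : (0:ℝ) < x ^ 2 + 1 := by positivity
    have h1 : 2 * (m + 1) - 1 = (2 * m - 1) + 2 := by omega
    simp only [h1]
    rw [pow_add, ← add_div,
      div_eq_div_iff (by positivity : ((x ^ 2 + 1) * (Real.exp (2 * π * x) - 1) : ℝ) ≠ 0) hD1.ne']
    ring
  have hπ : (0:ℝ) < π := Real.pi_pos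
  have hZ1 : 0 < Zr (2 * n) := Zr_pos (by omega)
  have hZ2 : 0 < Zr (2 * n + 2) := Zr_pos (by omega)
  have hn2 : 2 * (n + 1) = 2 * n + 2 := by omega
  have h2nfac : Nat.factorial (2 * n) = (2 * n) * Nat.factorial (2 * n - 1) := by
    conv_lhs => rw [show 2 * n = (2 * n - 1) + 1 by omega]
    rw [Nat.factorial_succ, show (2 * n - 1) + 1 = 2 * n by omega]
  have hfac : (Nat.factorial (2 * n + 2 - 1) : ℝ)
      = (2 * n + 1) * ((2 * n) * (Nat.factorial (2 * n - 1) : ℝ)) := by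
    rw [show 2 * n + 2 - 1 = (2 * n) + 1 by omega, Nat.factorial_succ, h2nfac]
    push_cast
    ring
  have hreal : (I n + I (n + 1)) / (I (n + 1) + I (n + 2))
      = 4 * π ^ 2 * Zr (2 * n) / ((2 * (n:ℝ)) * (2 * (n:ℝ) + 1) * Zr (2 * n + 2)) := by
    rw [key n hn, key (n + 1) (by omega), hn2, hfac]
    have hpow : (2 * π) ^ (2 * n + 2) = (2 * π) ^ (2 * n) * (2 * π) ^ 2 := by
      rw [← pow_add]
    rw [hpow]
    have h2πn : ((2:ℝ) * π) ^ (2 * n) ≠ 0 := by positivity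
    have hfne : (Nat.factorial (2 * n - 1) : ℝ) ≠ 0 := by positivity
    have hnne : (2 * (n : ℝ)) ≠ 0 := by
      have : (n : ℝ) ≠ 0 := by simp only [ne_eq, Nat.cast_eq_zero]; omega
      positivity
    have hn1ne : (2 * (n : ℝ) + 1) ≠ 0 := by positivity
    field_simp
    ring
  rw [hreal]
  have hz1 : riemannZeta (2 * (n:ℂ)) = ((Zr (2 * n) : ℝ) : ℂ) := by
    rw [show (2 * (n:ℂ)) = ((2 * n : ℕ) : ℂ) by push_cast; ring]
    exact zeta_eq_Zr (by omega)
  have hz2 : riemannZeta (2 * (n:ℂ) + 2) = ((Zr (2 * n + 2) : ℝ) : ℂ) := by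
    rw [show (2 * (n:ℂ) + 2) = ((2 * n + 2 : ℕ) : ℂ) by push_cast; ring]
    exact zeta_eq_Zr (by omega)
  rw [hz1, hz2]
  push_cast
  ring
end
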